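/- arXiv:1912.11382 — 3 statements merged into one kernel-verified Lean document; each statement's English description precedes it below -/
import Mathlib

section
/- Under the hypotheses of the previous error decomposition, suppose additionally that (with respect to the operator norm ‖·‖ and its supremum over s ∈ S) ‖H_i - Ĥ_i‖_∞ ≤ ε_i for i = 1,2,3,4, that f₁ := sup_s ‖D (I + D Ĥ₃(s) D)⁻¹ D Ĥ₄(s)‖ < ∞ and f₂ := sup_s ‖H₂(s) D (I + D H₃(s) D)⁻¹ D‖ < ∞. Then sup_{s∈S} ‖H(s) - Ĥ(s)‖ ≤ ε₁ + f₁ ε₂ + f₁ f₂ ε₃ + f₂ ε₄. -/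
open Matrix
open scoped Matrix.Norms.L2Operator

/-!
Writing `M = H₂ D (1 + D H₃ D)⁻¹ D` and `N = D (1 + D Ĥ₃ D)⁻¹ D Ĥ₄`, the resolvent identity
`A⁻¹ - B⁻¹ = A⁻¹ (B - A) B⁻¹` turns the difference of the two feedback terms into
`(H₂ - Ĥ₂) N - M (H₃ - Ĥ₃) N + M (H₄ - Ĥ₄)`. Submultiplicativity of the operator norm and
`‖N‖ ≤ f₁`, `‖M‖ ≤ f₂` then bound every term pointwise in `s`.
-/

section ClosedLoop

variable {R : Type*} [CommRing R] {l m n : Type*} [Fintype n] [DecidableEq n]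

noncomputable def closedLoop (D : Matrix n n R) (H₁ : Matrix l m R) (H₂ : Matrix l n R)
    (H₃ : Matrix n n R) (H₄ : Matrix n m R) : Matrix l m R :=
  H₁ - H₂ * D * (1 + D * H₃ * D)⁻¹ * D * H₄

theorem closedLoop_sub_closedLoop {D : Matrix n n R} {H₁ Ĥ₁ : Matrix l m R}
    {H₂ Ĥ₂ : Matrix l n R} {H₃ Ĥ₃ : Matrix n n R} {H₄ Ĥ₄ : Matrix n m R}
    (h : IsUnit (1 + D * H₃ * D)) (ĥ : IsUnit (1 + D * Ĥ₃ * D)) :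
    closedLoop D H₁ H₂ H₃ H₄ - closedLoop D Ĥ₁ Ĥ₂ Ĥ₃ Ĥ₄ =
      (H₁ - Ĥ₁) - (H₂ - Ĥ₂) * (D * (1 + D * Ĥ₃ * D)⁻¹ * D * Ĥ₄)
        + (H₂ * D * (1 + D * H₃ * D)⁻¹ * D) * (H₃ - Ĥ₃) * (D * (1 + D * Ĥ₃ * D)⁻¹ * D * Ĥ₄)
        - (H₂ * D * (1 + D * H₃ * D)⁻¹ * D) * (H₄ - Ĥ₄) := by
  have middle : H₂ * D * ((1 + D * Ĥ₃ * D)⁻¹ - (1 + D * H₃ * D)⁻¹) * D * Ĥ₄ =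
      (H₂ * D * (1 + D * H₃ * D)⁻¹ * D) * (H₃ - Ĥ₃) * (D * (1 + D * Ĥ₃ * D)⁻¹ * D * Ĥ₄) := by
    rw [← neg_sub, Matrix.inv_sub_inv (iff_of_true h ĥ)]
    simp only [Matrix.mul_neg, Matrix.neg_mul, Matrix.mul_sub, Matrix.sub_mul, Matrix.mul_add,
      Matrix.add_mul, Matrix.mul_assoc]
    abel
  rw [← middle]
  simp only [closedLoop, Matrix.mul_sub, Matrix.sub_mul, Matrix.mul_assoc]
  abel

end ClosedLoop

theorem norm_sub_mul_add_mul_mul_sub_mul_le {𝕜 : Type*} [RCLike 𝕜] {l m n : Type*}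
    [Fintype l] [Fintype m] [Fintype n] [DecidableEq m] [DecidableEq n]
    {E₁ : Matrix l m 𝕜} {E₂ M : Matrix l n 𝕜} {E₃ : Matrix n n 𝕜} {E₄ N : Matrix n m 𝕜}
    {ε₁ ε₂ ε₃ ε₄ f₁ f₂ : ℝ} (h₁ : ‖E₁‖ ≤ ε₁) (h₂ : ‖E₂‖ ≤ ε₂) (h₃ : ‖E₃‖ ≤ ε₃)
    (h₄ : ‖E₄‖ ≤ ε₄) (hN : ‖N‖ ≤ f₁) (hM : ‖M‖ ≤ f₂) :
    ‖E₁ - E₂ * N + M * E₃ * N - M * E₄‖ ≤ ε₁ + f₁ * ε₂ + f₁ * f₂ * ε₃ + f₂ * ε₄ := by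
  have hε₂ : 0 ≤ ε₂ := (norm_nonneg _).trans h₂
  have hε₃ : 0 ≤ ε₃ := (norm_nonneg _).trans h₃
  have hf₂ : 0 ≤ f₂ := (norm_nonneg _).trans hM
  calc ‖E₁ - E₂ * N + M * E₃ * N - M * E₄‖
      ≤ ‖E₁ - E₂ * N + M * E₃ * N‖ + ‖M * E₄‖ := norm_sub_le _ _
    _ ≤ ‖E₁ - E₂ * N‖ + ‖M * E₃ * N‖ + ‖M * E₄‖ := by gcongr; exact norm_add_le _ _
    _ ≤ ‖E₁‖ + ‖E₂ * N‖ + ‖M * E₃ * N‖ + ‖M * E₄‖ := by gcongr; exact norm_sub_le _ _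
    _ ≤ ‖E₁‖ + ‖E₂‖ * ‖N‖ + ‖M‖ * ‖E₃‖ * ‖N‖ + ‖M‖ * ‖E₄‖ := by
        gcongr
        · exact l2_opNorm_mul _ _
        · exact (l2_opNorm_mul _ _).trans (by gcongr; exact l2_opNorm_mul _ _)
        · exact l2_opNorm_mul _ _
    _ ≤ ε₁ + ε₂ * f₁ + f₂ * ε₃ * f₁ + f₂ * ε₄ := by gcongr
    _ = ε₁ + f₁ * ε₂ + f₁ * f₂ * ε₃ + f₂ * ε₄ := by ring

theorem error_bound_subsystem_reduction_general
    {S : Type*} (ℓ m k : ℕ)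
    (H₁ Hh₁ : S → Matrix (Fin ℓ) (Fin m) ℂ)
    (H₂ Hh₂ : S → Matrix (Fin ℓ) (Fin k) ℂ)
    (H₃ Hh₃ : S → Matrix (Fin k) (Fin k) ℂ)
    (H₄ Hh₄ : S → Matrix (Fin k) (Fin m) ℂ)
    (D : Matrix (Fin k) (Fin k) ℂ)
    (hinv : ∀ s : S, IsUnit ((1 : Matrix (Fin k) (Fin k) ℂ) + D * H₃ s * D))
    (hinv' : ∀ s : S, IsUnit ((1 : Matrix (Fin k) (Fin k) ℂ) + D * Hh₃ s * D))
    (H Hh : S → Matrix (Fin ℓ) (Fin m) ℂ)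
    (hH : ∀ s : S, H s = H₁ s -
      H₂ s * D * ((1 : Matrix (Fin k) (Fin k) ℂ) + D * H₃ s * D)⁻¹ * D * H₄ s)
    (hHh : ∀ s : S, Hh s = Hh₁ s -
      Hh₂ s * D * ((1 : Matrix (Fin k) (Fin k) ℂ) + D * Hh₃ s * D)⁻¹ * D * Hh₄ s)
    (ε₁ ε₂ ε₃ ε₄ f₁ f₂ : ℝ)
    (he₁ : ∀ s : S, ‖H₁ s - Hh₁ s‖ ≤ ε₁)
    (he₂ : ∀ s : S, ‖H₂ s - Hh₂ s‖ ≤ ε₂)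
    (he₃ : ∀ s : S, ‖H₃ s - Hh₃ s‖ ≤ ε₃)
    (he₄ : ∀ s : S, ‖H₄ s - Hh₄ s‖ ≤ ε₄)
    (hf₁ : ∀ s : S,
      ‖D * ((1 : Matrix (Fin k) (Fin k) ℂ) + D * Hh₃ s * D)⁻¹ * D * Hh₄ s‖ ≤ f₁)
    (hf₂ : ∀ s : S,
      ‖H₂ s * D * ((1 : Matrix (Fin k) (Fin k) ℂ) + D * H₃ s * D)⁻¹ * D‖ ≤ f₂) :
    ∀ s : S, ‖H s - Hh s‖ ≤ ε₁ + f₁ * ε₂ + f₁ * f₂ * ε₃ + f₂ * ε₄ := by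
  intro s
  have hdiff : H s - Hh s = closedLoop D (H₁ s) (H₂ s) (H₃ s) (H₄ s) -
      closedLoop D (Hh₁ s) (Hh₂ s) (Hh₃ s) (Hh₄ s) := by
    rw [hH s, hHh s]
    rfl
  rw [hdiff, closedLoop_sub_closedLoop (hinv s) (hinv' s)]
  exact norm_sub_mul_add_mul_mul_sub_mul_le (he₁ s) (he₂ s) (he₃ s) (he₄ s) (hf₁ s) (hf₂ s)

theorem error_bound_subsystem_reduction
    {S : Type*} (ℓ m k : ℕ)
    (H₁ Hh₁ : S → Matrix (Fin ℓ) (Fin m) ℂ)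
    (H₂ Hh₂ : S → Matrix (Fin ℓ) (Fin k) ℂ)
    (H₃ Hh₃ : S → Matrix (Fin k) (Fin k) ℂ)
    (H₄ Hh₄ : S → Matrix (Fin k) (Fin m) ℂ)
    (d : Fin k → ℝ) (hd : ∀ i, d i ≠ 0)
    (D : Matrix (Fin k) (Fin k) ℂ)
    (hD : D = Matrix.diagonal fun i => (d i : ℂ))
    (hinv : ∀ s : S, IsUnit ((1 : Matrix (Fin k) (Fin k) ℂ) + D * H₃ s * D))
    (hinv' : ∀ s : S, IsUnit ((1 : Matrix (Fin k) (Fin k) ℂ) + D * Hh₃ s * D))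
    (H Hh : S → Matrix (Fin ℓ) (Fin m) ℂ)
    (hH : ∀ s : S, H s = H₁ s -
      H₂ s * D * ((1 : Matrix (Fin k) (Fin k) ℂ) + D * H₃ s * D)⁻¹ * D * H₄ s)
    (hHh : ∀ s : S, Hh s = Hh₁ s -
      Hh₂ s * D * ((1 : Matrix (Fin k) (Fin k) ℂ) + D * Hh₃ s * D)⁻¹ * D * Hh₄ s)
    (ε₁ ε₂ ε₃ ε₄ f₁ f₂ : ℝ)
    (he₁ : ∀ s : S, ‖H₁ s - Hh₁ s‖ ≤ ε₁)
    (he₂ : ∀ s : S, ‖H₂ s - Hh₂ s‖ ≤ ε₂)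
    (he₃ : ∀ s : S, ‖H₃ s - Hh₃ s‖ ≤ ε₃)
    (he₄ : ∀ s : S, ‖H₄ s - Hh₄ s‖ ≤ ε₄)
    (hf₁ : ∀ s : S,
      ‖D * ((1 : Matrix (Fin k) (Fin k) ℂ) + D * Hh₃ s * D)⁻¹ * D * Hh₄ s‖ ≤ f₁)
    (hf₂ : ∀ s : S,
      ‖H₂ s * D * ((1 : Matrix (Fin k) (Fin k) ℂ) + D * H₃ s * D)⁻¹ * D‖ ≤ f₂) :
    ∀ s : S, ‖H s - Hh s‖ ≤ ε₁ + f₁ * ε₂ + f₁ * f₂ * ε₃ + f₂ * ε₄ :=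
  error_bound_subsystem_reduction_general ℓ m k H₁ Hh₁ H₂ Hh₂ H₃ Hh₃ H₄ Hh₄ D hinv hinv' H Hh hH hHh
    ε₁ ε₂ ε₃ ε₄ f₁ f₂ he₁ he₂ he₃ he₄ hf₁ hf₂
end

section
/- Let M ∈ ℂ^{k×k} satisfy Re⟨x, Mx⟩ ≥ 0 for all x ∈ ℂ^k (i.e., M + M* is positive semidefinite), and let D ∈ ℝ^{k×k} be any real diagonal matrix. Then I + D M D is invertible. -/
open Matrix
open scoped ComplexOrder

/-!
If `(1 + N) v = 0` then `⟨v, N v⟩ = -‖v‖²`, which is incompatible with `Re ⟨v, N v⟩ ≥ 0` unless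
`v = 0`. A real diagonal `D` is Hermitian, so `D M D = Dᴴ M D`, and congruence preserves the
positive semidefiniteness of `M + Mᴴ`.
-/

namespace Matrix

variable {𝕜 n m : Type*} [RCLike 𝕜] [Fintype n]

theorem dotProduct_conjTranspose_mulVec (N : Matrix n n 𝕜) (x : n → 𝕜) :
    star x ⬝ᵥ (Nᴴ *ᵥ x) = star (star x ⬝ᵥ (N *ᵥ x)) := by
  rw [star_dotProduct, star_mulVec, ← dotProduct_mulVec, conjTranspose_conjTranspose]

theorem PosSemidef.re_dotProduct_mulVec_nonneg_of_add_conjTranspose {N : Matrix n n 𝕜}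
    (hN : (N + Nᴴ).PosSemidef) (x : n → 𝕜) : 0 ≤ RCLike.re (star x ⬝ᵥ (N *ᵥ x)) := by
  have h := hN.dotProduct_mulVec_nonneg x
  rw [add_mulVec, dotProduct_add, dotProduct_conjTranspose_mulVec, RCLike.star_def,
    RCLike.add_conj] at h
  simpa using (RCLike.nonneg_iff.1 h).1

theorem PosSemidef.conjTranspose_mul_mul_same_add_conjTranspose {M : Matrix n n 𝕜}
    (hM : (M + Mᴴ).PosSemidef) [Fintype m] (B : Matrix n m 𝕜) :
    (Bᴴ * M * B + (Bᴴ * M * B)ᴴ).PosSemidef := by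
  have h : Bᴴ * M * B + (Bᴴ * M * B)ᴴ = Bᴴ * (M + Mᴴ) * B := by
    simp only [conjTranspose_mul, conjTranspose_conjTranspose, Matrix.mul_add, Matrix.add_mul,
      Matrix.mul_assoc]
  exact h ▸ hM.conjTranspose_mul_mul_same B

theorem isUnit_one_add_of_re_dotProduct_mulVec_nonneg [DecidableEq n] {N : Matrix n n 𝕜}
    (hN : ∀ x, 0 ≤ RCLike.re (star x ⬝ᵥ (N *ᵥ x))) : IsUnit (1 + N) := by
  rw [isUnit_iff_isUnit_det, isUnit_iff_ne_zero]
  intro hdet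
  obtain ⟨v, hv, hker⟩ := exists_mulVec_eq_zero_iff.2 hdet
  have hNv : N *ᵥ v = -v := by
    rw [add_mulVec, one_mulVec] at hker
    exact (neg_eq_of_add_eq_zero_right hker).symm
  have hvv : 0 < RCLike.re (star v ⬝ᵥ v) :=
    (RCLike.pos_iff.1 (dotProduct_star_self_pos_iff.2 hv)).1
  have hre := hN v
  rw [hNv, dotProduct_neg, map_neg] at hre
  linarith

end Matrix

theorem dissipative_feedback_invertible
    (k : ℕ) (M : Matrix (Fin k) (Fin k) ℂ)
    (hM : (M + Mᴴ).PosSemidef)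
    (d : Fin k → ℝ)
    (D : Matrix (Fin k) (Fin k) ℂ)
    (hD : D = Matrix.diagonal fun i => (d i : ℂ)) :
    IsUnit ((1 : Matrix (Fin k) (Fin k) ℂ) + D * M * D) := by
  have hDH : Dᴴ = D := by simp [hD, diagonal_conjTranspose]
  apply isUnit_one_add_of_re_dotProduct_mulVec_nonneg
  nth_rw 1 [← hDH]
  exact (hM.conjTranspose_mul_mul_same_add_conjTranspose D)
    |>.re_dotProduct_mulVec_nonneg_of_add_conjTranspose
end

section
/- Consider the second-order system matrices M, K ∈ ℝ^{n×n} symmetric positive definite, D ∈ ℝ^{n×n} symmetric positive semidefinite, and U₂ ∈ ℝ^{n×k}. For every s ∈ ℂ with Re(s) ≥ 0, s ≠ 0, such that s²M + sD + K is invertible, the matrix H₃(s) = s U₂ᵀ (s²M + sD + K)⁻¹ U₂ satisfies H₃(s) + H₃(s)* ≥ 0 (positive semidefinite Hermitian part). -/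
/-!
Put `A = s²M + sD + K` and, for `x : ℂᵏ`, `y = A⁻¹ U₂ x`. Since `U₂` is real, `U₂ᵀ = U₂ᴴ`, so
`x* H₃ x = s (Ay)* y = s · conj (y* A y) = s (s̄² m + s̄ d + k)` with `m, d, k ≥ 0` the quadratic
forms of `M, D, K` at `y`. Its real part `|s|² Re s · m + |s|² d + Re s · k` is nonnegative for
`Re s ≥ 0`, and `x* (H₃ + H₃*) x` is twice that real part.
-/

open Matrix ComplexConjugate
open scoped ComplexOrder

lemma Complex.re_conj_mul_quadratic_nonneg {s : ℂ} (hs : 0 ≤ s.re) {m d k : ℝ}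
    (hm : 0 ≤ m) (hd : 0 ≤ d) (hk : 0 ≤ k) :
    0 ≤ (conj s * (s ^ 2 * m + s * d + k)).re := by
  have hre : (conj s * (s ^ 2 * m + s * d + k)).re
      = normSq s * s.re * m + normSq s * d + s.re * k := by
    simp only [normSq_apply, pow_two, mul_re, mul_im, add_re, add_im, conj_re, conj_im, ofReal_re,
      ofReal_im]
    ring
  rw [hre]
  have := normSq_nonneg s
  positivity

namespace Matrix

variable {ι κ : Type*}

lemma conjTranspose_map_ofReal (A : Matrix ι κ ℝ) :
    (A.map Complex.ofReal)ᴴ = (A.map Complex.ofReal)ᵀ := by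
  ext i j
  simp [conjTranspose_apply, Complex.conj_ofReal]

open scoped MatrixOrder in
lemma PosSemidef.map_ofReal [Fintype ι] [DecidableEq ι] {A : Matrix ι ι ℝ} (hA : A.PosSemidef) :
    (A.map Complex.ofReal).PosSemidef := by
  set B := (CFC.sqrt A).map Complex.ofReal
  have hB : Bᴴ = B := by
    rw [conjTranspose_map_ofReal, ← transpose_map, ← conjTranspose_eq_transpose_of_trivial,
      (CFC.sqrt_nonneg A).posSemidef.isHermitian.eq]
  have hBB : Bᴴ * B = A.map Complex.ofReal := by
    rw [hB, ← CFC.sqrt_mul_sqrt_self A hA.nonneg]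
    exact (Matrix.map_mul (f := Complex.ofRealHom)).symm
  exact hBB ▸ posSemidef_conjTranspose_mul_self B

lemma posSemidef_add_conjTranspose_of_re_nonneg [Fintype κ] {H : Matrix κ κ ℂ}
    (hH : ∀ x, 0 ≤ (star x ⬝ᵥ (H *ᵥ x)).re) : (H + Hᴴ).PosSemidef := by
  refine .of_dotProduct_mulVec_nonneg (isHermitian_add_transpose_self H) fun x => ?_
  have hstar : star x ⬝ᵥ (Hᴴ *ᵥ x) = conj (star x ⬝ᵥ (H *ᵥ x)) := by
    rw [star_dotProduct, star_mulVec, conjTranspose_conjTranspose, ← dotProduct_mulVec]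
    rfl
  rw [add_mulVec, dotProduct_add, hstar, Complex.add_conj, Complex.zero_le_real]
  linarith [hH x]

lemma dotProduct_conjTranspose_mul_inv_mul_mulVec {R : Type*} [CommRing R] [StarRing R]
    [Fintype ι] [Fintype κ] [DecidableEq ι] {A : Matrix ι ι R} (hA : IsUnit A)
    (B : Matrix ι κ R) {x : κ → R} {y : ι → R} (hy : A *ᵥ y = B *ᵥ x) :
    star x ⬝ᵥ ((Bᴴ * A⁻¹ * B) *ᵥ x) = star (star y ⬝ᵥ (A *ᵥ y)) := by
  have hy' : A⁻¹ *ᵥ B *ᵥ x = y := by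
    rw [← hy, mulVec_mulVec, nonsing_inv_mul _ ((isUnit_iff_isUnit_det A).mp hA), one_mulVec]
  rw [← mulVec_mulVec, ← mulVec_mulVec, hy', dotProduct_mulVec, ← star_mulVec, ← hy,
    star_dotProduct]

lemma re_conj_mul_dotProduct_pencil_mulVec_nonneg [Fintype ι] {M D K : Matrix ι ι ℂ}
    (hM : M.PosSemidef) (hD : D.PosSemidef) (hK : K.PosSemidef) {s : ℂ} (hs : 0 ≤ s.re)
    (y : ι → ℂ) : 0 ≤ (conj s * (star y ⬝ᵥ ((s ^ 2 • M + s • D + K) *ᵥ y))).re := by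
  have hreal {P : Matrix ι ι ℂ} (hP : P.PosSemidef) :
      star y ⬝ᵥ (P *ᵥ y) = ((star y ⬝ᵥ (P *ᵥ y)).re : ℂ) :=
    Complex.eq_re_of_ofReal_le (Complex.ofReal_zero ▸ hP.dotProduct_mulVec_nonneg y)
  rw [add_mulVec, add_mulVec, smul_mulVec, smul_mulVec, dotProduct_add, dotProduct_add,
    dotProduct_smul, dotProduct_smul, smul_eq_mul, smul_eq_mul, hreal hM, hreal hD, hreal hK]
  exact Complex.re_conj_mul_quadratic_nonneg hs (hM.re_dotProduct_nonneg y)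
    (hD.re_dotProduct_nonneg y) (hK.re_dotProduct_nonneg y)

end Matrix

theorem damper_channel_positive_real_general
    (n k : ℕ)
    (M K D : Matrix (Fin n) (Fin n) ℝ)
    (hM : M.PosDef) (hK : K.PosDef) (hD : D.PosSemidef)
    (U₂ : Matrix (Fin n) (Fin k) ℝ)
    (s : ℂ) (hs : 0 ≤ s.re)
    (Mc Kc Dc : Matrix (Fin n) (Fin n) ℂ)
    (hMc : Mc = M.map Complex.ofReal) (hKc : Kc = K.map Complex.ofReal)
    (hDc : Dc = D.map Complex.ofReal)
    (U₂c : Matrix (Fin n) (Fin k) ℂ) (hU₂c : U₂c = U₂.map Complex.ofReal)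
    (hinv : IsUnit (s ^ 2 • Mc + s • Dc + Kc))
    (H₃ : Matrix (Fin k) (Fin k) ℂ)
    (hH₃ : H₃ = s • (U₂cᵀ * (s ^ 2 • Mc + s • Dc + Kc)⁻¹ * U₂c)) :
    (H₃ + H₃ᴴ).PosSemidef := by
  subst hMc hKc hDc hU₂c hH₃
  refine posSemidef_add_conjTranspose_of_re_nonneg fun x => ?_
  set A := s ^ 2 • M.map Complex.ofReal + s • D.map Complex.ofReal + K.map Complex.ofReal
  have hy : A *ᵥ (A⁻¹ *ᵥ U₂.map Complex.ofReal *ᵥ x) = U₂.map Complex.ofReal *ᵥ x := by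
    rw [mulVec_mulVec, mul_nonsing_inv _ ((isUnit_iff_isUnit_det A).mp hinv), one_mulVec]
  rw [smul_mulVec, dotProduct_smul, smul_eq_mul, ← conjTranspose_map_ofReal,
    dotProduct_conjTranspose_mul_inv_mul_mulVec hinv _ hy, ← Complex.conj_re, map_mul,
    Complex.star_def, Complex.conj_conj]
  exact re_conj_mul_dotProduct_pencil_mulVec_nonneg hM.posSemidef.map_ofReal hD.map_ofReal
    hK.posSemidef.map_ofReal hs _

theorem damper_channel_positive_real
    (n k : ℕ)
    (M K D : Matrix (Fin n) (Fin n) ℝ)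
    (hM : M.PosDef) (hK : K.PosDef) (hD : D.PosSemidef)
    (U₂ : Matrix (Fin n) (Fin k) ℝ)
    (s : ℂ) (hs : 0 ≤ s.re) (hs0 : s ≠ 0)
    (Mc Kc Dc : Matrix (Fin n) (Fin n) ℂ)
    (hMc : Mc = M.map Complex.ofReal) (hKc : Kc = K.map Complex.ofReal)
    (hDc : Dc = D.map Complex.ofReal)
    (U₂c : Matrix (Fin n) (Fin k) ℂ) (hU₂c : U₂c = U₂.map Complex.ofReal)
    (hinv : IsUnit (s ^ 2 • Mc + s • Dc + Kc))
    (H₃ : Matrix (Fin k) (Fin k) ℂ)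
    (hH₃ : H₃ = s • (U₂cᵀ * (s ^ 2 • Mc + s • Dc + Kc)⁻¹ * U₂c)) :
    (H₃ + H₃ᴴ).PosSemidef :=
  damper_channel_positive_real_general n k M K D hM hK hD U₂ s hs Mc Kc Dc hMc hKc hDc U₂c hU₂c hinv
    H₃ hH₃
end
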